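/- The modulational instability index satisfies lim_{z→0+} Γ(z)/z² = 1/2. -/

import Mathlib

open Real Filter Set Topology
/-- The Whitham dispersion symbol `α(ξ) = √(tanh ξ / ξ)` for `ξ ≠ 0`, with `α(0) = 1`. -/
noncomputable def whithamSymbol (ξ : ℝ) : ℝ :=
  if ξ = 0 then 1 else Real.sqrt (Real.tanh ξ / ξ)

/-- The modulational instability index `Γ(z) = 3α(z) − 2α(2z) − 1 + z·α'(z)`. -/
noncomputable def modulationalIndex (z : ℝ) : ℝ :=
  3 * whithamSymbol z - 2 * whithamSymbol (2 * z) - 1 + z * deriv whithamSymbol z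


lemma continuous_tanh' : Continuous Real.tanh := by
  have : Real.tanh = fun x => Real.sinh x / Real.cosh x := funext fun x => Real.tanh_eq_sinh_div_cosh x
  rw [this]
  exact Real.continuous_sinh.div Real.continuous_cosh fun x => (Real.cosh_pos x).ne'



lemma myHasDerivAt_tanh (x : ℝ) : HasDerivAt Real.tanh (1 / Real.cosh x ^ 2) x := by
  have h := (Real.hasDerivAt_sinh x).div (Real.hasDerivAt_cosh x) (Real.cosh_pos x).ne'
  have hfun : (fun y => Real.sinh y / Real.cosh y) = Real.tanh := by
    funext y; rw [Real.tanh_eq_sinh_div_cosh]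
  rw [show (Real.sinh / Real.cosh) = Real.tanh from hfun] at h
  refine h.congr_deriv ?_
  have := Real.cosh_sq_sub_sinh_sq x
  rw [div_left_inj' (pow_pos (Real.cosh_pos x) 2).ne']
  nlinarith [this]

lemma tendsto_tanh_div : Tendsto (fun z : ℝ => Real.tanh z / z) (𝓝[>] (0:ℝ)) (𝓝 1) := by
  have h := myHasDerivAt_tanh 0
  rw [hasDerivAt_iff_tendsto_slope] at h
  have h2 : Tendsto (slope Real.tanh 0) (𝓝[>] (0:ℝ)) (𝓝 (1 / Real.cosh 0 ^ 2)) :=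
    h.mono_left (nhdsWithin_mono 0 (fun x hx => ne_of_gt hx))
  simp only [Real.cosh_zero, one_pow, div_one] at h2
  refine h2.congr fun z => ?_
  simp [slope_def_field, Real.tanh_zero]

lemma tendsto_sinh_div : Tendsto (fun z : ℝ => Real.sinh z / z) (𝓝[>] (0:ℝ)) (𝓝 1) := by
  have h := Real.hasDerivAt_sinh 0
  rw [hasDerivAt_iff_tendsto_slope] at h
  have h2 : Tendsto (slope Real.sinh 0) (𝓝[>] (0:ℝ)) (𝓝 (Real.cosh 0)) :=
    h.mono_left (nhdsWithin_mono 0 (fun x hx => ne_of_gt hx))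
  rw [Real.cosh_zero] at h2
  refine h2.congr fun z => ?_
  simp [slope_def_field, Real.sinh_zero]




lemma tendsto_cube : Tendsto (fun z : ℝ => (Real.tanh z - z) / z ^ 3) (𝓝[>] (0:ℝ)) (𝓝 (-(1/3))) := by
  apply HasDerivAt.lhopital_zero_nhdsGT
    (f' := fun z => 1 / Real.cosh z ^ 2 - 1) (g' := fun z => 3 * z ^ 2)
  · filter_upwards with z
    exact (myHasDerivAt_tanh z).sub (hasDerivAt_id z)
  · filter_upwards with z
    simpa using (hasDerivAt_pow 3 z)
  · filter_upwards [self_mem_nhdsWithin] with z (hz : 0 < z)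
    positivity
  · have : Tendsto (fun z : ℝ => Real.tanh z - z) (𝓝 (0:ℝ)) (𝓝 (Real.tanh 0 - 0)) :=
      (continuous_tanh'.sub continuous_id).tendsto 0
    simpa using this.mono_left nhdsWithin_le_nhds
  · have : Tendsto (fun z : ℝ => z ^ 3) (𝓝 (0:ℝ)) (𝓝 ((0:ℝ) ^ 3)) := (continuous_pow 3).tendsto 0
    simpa using this.mono_left nhdsWithin_le_nhds
  · have key : Tendsto (fun z : ℝ => -((Real.tanh z / z) ^ 2) / 3) (𝓝[>] (0:ℝ)) (𝓝 (-(1/3))) := by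
      have h0 := ((tendsto_tanh_div.pow 2).neg).div_const (3:ℝ)
      convert h0 using 2 <;> norm_num
    refine key.congr' ?_
    filter_upwards [self_mem_nhdsWithin] with z (hz : 0 < z)
    have hc := (Real.cosh_pos z).ne'
    have hsq := Real.cosh_sq_sub_sinh_sq z
    rw [Real.tanh_eq_sinh_div_cosh]
    field_simp
    nlinarith [hsq, sq_nonneg (Real.sinh z), sq_nonneg z]

lemma tendsto_cube2 : Tendsto (fun z : ℝ => (z / Real.cosh z ^ 2 - Real.tanh z) / z ^ 3)
    (𝓝[>] (0:ℝ)) (𝓝 (-(2/3))) := by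
  apply HasDerivAt.lhopital_zero_nhdsGT
    (f' := fun z => (1 * Real.cosh z ^ 2 - z * (2 * Real.cosh z ^ 1 * Real.sinh z)) / (Real.cosh z ^ 2) ^ 2
      - 1 / Real.cosh z ^ 2) (g' := fun z => 3 * z ^ 2)
  · filter_upwards with z
    have h1 : HasDerivAt (fun y : ℝ => Real.cosh y ^ 2) (2 * Real.cosh z ^ 1 * Real.sinh z) z :=
      (Real.hasDerivAt_cosh z).pow 2
    have h2 : HasDerivAt (fun y : ℝ => y / Real.cosh y ^ 2)
        ((1 * Real.cosh z ^ 2 - z * (2 * Real.cosh z ^ 1 * Real.sinh z)) / (Real.cosh z ^ 2) ^ 2) z :=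
      (hasDerivAt_id z).div h1 (by positivity)
    exact h2.sub (myHasDerivAt_tanh z)
  · filter_upwards with z
    simpa using (hasDerivAt_pow 3 z)
  · filter_upwards [self_mem_nhdsWithin] with z (hz : 0 < z)
    positivity
  · have : Tendsto (fun z : ℝ => z / Real.cosh z ^ 2 - Real.tanh z) (𝓝 (0:ℝ))
        (𝓝 (0 / Real.cosh 0 ^ 2 - Real.tanh 0)) :=
      ((continuous_id.div (Real.continuous_cosh.pow 2) (fun x => (pow_pos (Real.cosh_pos x) 2).ne')).sub
        continuous_tanh').tendsto 0
    simpa using this.mono_left nhdsWithin_le_nhds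
  · have : Tendsto (fun z : ℝ => z ^ 3) (𝓝 (0:ℝ)) (𝓝 ((0:ℝ) ^ 3)) := (continuous_pow 3).tendsto 0
    simpa using this.mono_left nhdsWithin_le_nhds
  · have key : Tendsto (fun z : ℝ => -(2/3) * (Real.sinh z / z) * (1 / Real.cosh z ^ 3))
        (𝓝[>] (0:ℝ)) (𝓝 (-(2/3))) := by
      have hc : Tendsto (fun z : ℝ => 1 / Real.cosh z ^ 3) (𝓝[>] (0:ℝ)) (𝓝 1) := by
        have : Tendsto (fun z : ℝ => 1 / Real.cosh z ^ 3) (𝓝 (0:ℝ)) (𝓝 (1 / Real.cosh 0 ^ 3)) :=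
          (continuous_const.div (Real.continuous_cosh.pow 3) (fun x => (pow_pos (Real.cosh_pos x) 3).ne')).tendsto 0
        simpa using this.mono_left nhdsWithin_le_nhds
      have := ((tendsto_sinh_div.const_mul (-(2/3) : ℝ)).mul hc)
      simpa [mul_comm] using this
    refine key.congr' ?_
    filter_upwards [self_mem_nhdsWithin] with z (hz : 0 < z)
    have hc := (Real.cosh_pos z).ne'
    have hsq := Real.cosh_sq_sub_sinh_sq z
    field_simp
    ring_nf
    try nlinarith [hsq, sq_nonneg (Real.sinh z), Real.cosh_pos z, hz]


lemma tanh_div_pos {z : ℝ} (hz : 0 < z) : 0 < Real.tanh z / z := by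
  apply div_pos _ hz
  rw [Real.tanh_eq_sinh_div_cosh]
  exact div_pos (Real.sinh_pos_iff.mpr hz) (Real.cosh_pos z)

lemma tendsto_sqrt_u : Tendsto (fun z : ℝ => Real.sqrt (Real.tanh z / z)) (𝓝[>] (0:ℝ)) (𝓝 1) := by
  have := (Real.continuous_sqrt.tendsto 1).comp tendsto_tanh_div
  simpa [Function.comp_def] using this

lemma T1 : Tendsto (fun z : ℝ => (Real.sqrt (Real.tanh z / z) - 1) / z ^ 2)
    (𝓝[>] (0:ℝ)) (𝓝 (-(1/6))) := by
  have base := tendsto_cube.div (tendsto_sqrt_u.add (tendsto_const_nhds (x := (1:ℝ))))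
    (by norm_num)
  have base' : Tendsto (fun z : ℝ => ((Real.tanh z - z) / z ^ 3) / (Real.sqrt (Real.tanh z / z) + 1))
      (𝓝[>] (0:ℝ)) (𝓝 (-(1/6))) := by convert base using 2 <;> norm_num
  refine base'.congr' ?_
  filter_upwards [self_mem_nhdsWithin] with z (hz : 0 < z)
  set a := Real.sqrt (Real.tanh z / z) with ha
  have hpos := tanh_div_pos hz
  have ha2 : a ^ 2 = Real.tanh z / z := Real.sq_sqrt hpos.le
  have ha0 : 0 ≤ a := Real.sqrt_nonneg _
  have ha1 : a + 1 ≠ 0 := by positivity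
  have ha2' : a ^ 2 * z = Real.tanh z := by
    rw [ha2]; field_simp
  field_simp
  ring_nf
  nlinarith [ha2', hz, sq_nonneg a, sq_nonneg z]

lemma tendsto_two_mul : Tendsto (fun z : ℝ => 2 * z) (𝓝[>] (0:ℝ)) (𝓝[>] (0:ℝ)) := by
  apply tendsto_nhdsWithin_of_tendsto_nhds_of_eventually_within
  · have : Tendsto (fun z : ℝ => 2 * z) (𝓝 (0:ℝ)) (𝓝 (2 * 0)) :=
      (continuous_const.mul continuous_id).tendsto 0
    simpa using this.mono_left nhdsWithin_le_nhds
  · filter_upwards [self_mem_nhdsWithin] with z (hz : 0 < z)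
    exact mul_pos two_pos hz

lemma T2 : Tendsto (fun z : ℝ => (Real.sqrt (Real.tanh (2 * z) / (2 * z)) - 1) / z ^ 2)
    (𝓝[>] (0:ℝ)) (𝓝 (-(2/3))) := by
  have hcomp := (T1.comp tendsto_two_mul).const_mul (4:ℝ)
  have hval : Tendsto (fun z : ℝ =>
      4 * ((Real.sqrt (Real.tanh (2 * z) / (2 * z)) - 1) / (2 * z) ^ 2))
      (𝓝[>] (0:ℝ)) (𝓝 (-(2/3))) := by
    convert hcomp using 2
    all_goals norm_num
  refine hval.congr' ?_
  filter_upwards [self_mem_nhdsWithin] with z (hz : 0 < z)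
  have h4 : ((2:ℝ) * z) ^ 2 = 4 * z ^ 2 := by ring
  rw [h4, ← mul_div_assoc, mul_div_mul_left _ _ (by norm_num : (4:ℝ) ≠ 0)]

lemma T3 : Tendsto (fun z : ℝ =>
    ((1 / Real.cosh z ^ 2 * z - Real.tanh z * 1) / z ^ 2 / z) / (2 * Real.sqrt (Real.tanh z / z)))
    (𝓝[>] (0:ℝ)) (𝓝 (-(1/3))) := by
  have base := tendsto_cube2.div (tendsto_sqrt_u.const_mul (2:ℝ)) (by norm_num)
  have base' : Tendsto (fun z : ℝ =>
      ((z / Real.cosh z ^ 2 - Real.tanh z) / z ^ 3) / (2 * Real.sqrt (Real.tanh z / z)))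
      (𝓝[>] (0:ℝ)) (𝓝 (-(1/3))) := by convert base using 2 <;> norm_num
  refine base'.congr' ?_
  filter_upwards [self_mem_nhdsWithin] with z (hz : 0 < z)
  congr 1
  have hc := (Real.cosh_pos z).ne'
  have hkey : (1 / Real.cosh z ^ 2 * z - Real.tanh z * 1) / z ^ 2 / z
      = (z / Real.cosh z ^ 2 - Real.tanh z) / z ^ 3 := by
    rw [div_div, show z ^ 2 * z = z ^ 3 by ring]
    ring_nf
  rw [hkey]

theorem modulationalIndex_limit_zero :
    Filter.Tendsto (fun z : ℝ => modulationalIndex z / z ^ 2)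
      (nhdsWithin 0 (Set.Ioi 0)) (nhds (1 / 2)) := by
  have comb := ((T1.const_mul (3:ℝ)).sub (T2.const_mul (2:ℝ))).add T3
  have comb' : Tendsto (fun z : ℝ =>
      3 * ((Real.sqrt (Real.tanh z / z) - 1) / z ^ 2)
      - 2 * ((Real.sqrt (Real.tanh (2 * z) / (2 * z)) - 1) / z ^ 2)
      + ((1 / Real.cosh z ^ 2 * z - Real.tanh z * 1) / z ^ 2 / z)
          / (2 * Real.sqrt (Real.tanh z / z)))
      (𝓝[>] (0:ℝ)) (𝓝 (1/2)) := by
    convert comb using 2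
    norm_num
  refine comb'.congr' ?_
  filter_upwards [self_mem_nhdsWithin] with z (hz : 0 < z)
  have hz0 : z ≠ 0 := hz.ne'
  have hz2 : (2 * z) ≠ 0 := by positivity
  have hpos := tanh_div_pos hz
  have hapos : 0 < Real.sqrt (Real.tanh z / z) := Real.sqrt_pos.mpr hpos
  -- compute the derivative of whithamSymbol at z
  have hu : HasDerivAt (fun y : ℝ => Real.tanh y / y)
      ((1 / Real.cosh z ^ 2 * z - Real.tanh z * 1) / z ^ 2) z :=
    (myHasDerivAt_tanh z).div (hasDerivAt_id z) hz0
  have hs : HasDerivAt (fun y : ℝ => Real.sqrt (Real.tanh y / y))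
      (((1 / Real.cosh z ^ 2 * z - Real.tanh z * 1) / z ^ 2)
        / (2 * Real.sqrt (Real.tanh z / z))) z :=
    hu.sqrt hpos.ne'
  have heq : whithamSymbol =ᶠ[𝓝 z] fun y : ℝ => Real.sqrt (Real.tanh y / y) := by
    have hmem : {y : ℝ | y ≠ 0} ∈ 𝓝 z := isOpen_ne.mem_nhds hz0
    filter_upwards [hmem] with y hy
    simp [whithamSymbol, hy]
  have hderiv : deriv whithamSymbol z =
      ((1 / Real.cosh z ^ 2 * z - Real.tanh z * 1) / z ^ 2)
        / (2 * Real.sqrt (Real.tanh z / z)) := by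
    rw [heq.deriv_eq, hs.deriv]
  have hW1 : whithamSymbol z = Real.sqrt (Real.tanh z / z) := if_neg hz0
  have hW2 : whithamSymbol (2 * z) = Real.sqrt (Real.tanh (2 * z) / (2 * z)) := if_neg hz2
  rw [modulationalIndex, hW1, hW2, hderiv]
  set a := Real.sqrt (Real.tanh z / z)
  set b := Real.sqrt (Real.tanh (2 * z) / (2 * z))
  set c := (1 / Real.cosh z ^ 2 * z - Real.tanh z * 1) / z ^ 2
  field_simp
  ring
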